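/- arXiv:1005.3286 — 6 statements merged into one kernel-verified Lean document; each statement's English description precedes it below -/
import Mathlib

section
/- Let 0 < r < 1. Then the equation 2rm = (m − 1/2)²(m + 3/2) has exactly three real solutions m₁ < m₂ < m₃, and they satisfy m₁ < −3/2, 0 < m₂ < 1/2, and 1/2 < m₃ < 3/2. -/
/-!
The cubic `f(m) = (m - 1/2)²(m + 3/2) - 2rm` changes sign on each of the intervals
`(-3, -3/2)`, `(0, 1/2)` and `(1/2, 3/2)`: its values at the five endpoints are
`6r - 147/8 < 0`, `3r > 0`, `3/8 > 0`, `-r < 0` and `3 - 3r > 0`.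
The intermediate value theorem gives a root in each interval, and a monic cubic with three
distinct roots is the product of the corresponding linear factors, so there are no others.
-/

section Cubic

variable {K : Type*} [Field K] {b c d m₁ m₂ m₃ : K}

theorem cubic_eq_prod_sub_of_roots (h₁₂ : m₁ ≠ m₂) (h₁₃ : m₁ ≠ m₃) (h₂₃ : m₂ ≠ m₃)
    (h₁ : m₁ ^ 3 + b * m₁ ^ 2 + c * m₁ + d = 0) (h₂ : m₂ ^ 3 + b * m₂ ^ 2 + c * m₂ + d = 0)
    (h₃ : m₃ ^ 3 + b * m₃ ^ 2 + c * m₃ + d = 0) (x : K) :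
    x ^ 3 + b * x ^ 2 + c * x + d = (x - m₁) * (x - m₂) * (x - m₃) := by
  -- Divided differences of the cubic at its roots produce Vieta's formulas `e₁`, `e₂`, `e₃`.
  have q₁₂ : m₁ ^ 2 + m₁ * m₂ + m₂ ^ 2 + b * (m₁ + m₂) + c = 0 := by
    refine (mul_eq_zero.mp ?_).resolve_left (sub_ne_zero.mpr h₁₂)
    linear_combination h₁ - h₂
  have q₁₃ : m₁ ^ 2 + m₁ * m₃ + m₃ ^ 2 + b * (m₁ + m₃) + c = 0 := by
    refine (mul_eq_zero.mp ?_).resolve_left (sub_ne_zero.mpr h₁₃)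
    linear_combination h₁ - h₃
  have e₁ : m₁ + m₂ + m₃ + b = 0 := by
    refine (mul_eq_zero.mp ?_).resolve_left (sub_ne_zero.mpr h₂₃)
    linear_combination q₁₂ - q₁₃
  have e₂ : m₁ * m₂ + m₁ * m₃ + m₂ * m₃ - c = 0 := by
    linear_combination (m₁ + m₂) * e₁ - q₁₂
  have e₃ : m₁ * m₂ * m₃ + d = 0 := by
    linear_combination h₁ - m₁ ^ 2 * e₁ + m₁ * e₂
  linear_combination x ^ 2 * e₁ - x * e₂ + e₃

theorem cubic_eq_zero_iff_of_roots (h₁₂ : m₁ ≠ m₂) (h₁₃ : m₁ ≠ m₃) (h₂₃ : m₂ ≠ m₃)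
    (h₁ : m₁ ^ 3 + b * m₁ ^ 2 + c * m₁ + d = 0) (h₂ : m₂ ^ 3 + b * m₂ ^ 2 + c * m₂ + d = 0)
    (h₃ : m₃ ^ 3 + b * m₃ ^ 2 + c * m₃ + d = 0) (x : K) :
    x ^ 3 + b * x ^ 2 + c * x + d = 0 ↔ x = m₁ ∨ x = m₂ ∨ x = m₃ := by
  rw [cubic_eq_prod_sub_of_roots h₁₂ h₁₃ h₂₃ h₁ h₂ h₃]
  simp only [mul_eq_zero, sub_eq_zero, or_assoc]

end Cubic

noncomputable def fixedPointCubic (r m : ℝ) : ℝ := (m - 1 / 2) ^ 2 * (m + 3 / 2) - 2 * r * m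

theorem fixedPointCubic_eq (r m : ℝ) :
    fixedPointCubic r m = m ^ 3 + 1 / 2 * m ^ 2 + (-(5 / 4) - 2 * r) * m + 3 / 8 := by
  unfold fixedPointCubic; ring

theorem fixedPointCubic_eq_zero_iff (r m : ℝ) :
    fixedPointCubic r m = 0 ↔ 2 * r * m = (m - 1 / 2) ^ 2 * (m + 3 / 2) := by
  rw [fixedPointCubic, sub_eq_zero, eq_comm]

theorem continuous_fixedPointCubic (r : ℝ) : Continuous (fixedPointCubic r) := by
  unfold fixedPointCubic; fun_prop

theorem exists_fixedPointCubic_root_of_lt_of_gt {r a b : ℝ} (hab : a ≤ b)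
    (ha : fixedPointCubic r a < 0) (hb : 0 < fixedPointCubic r b) :
    ∃ m ∈ Set.Ioo a b, fixedPointCubic r m = 0 :=
  intermediate_value_Ioo hab (continuous_fixedPointCubic r).continuousOn ⟨ha, hb⟩

theorem exists_fixedPointCubic_root_of_gt_of_lt {r a b : ℝ} (hab : a ≤ b)
    (ha : 0 < fixedPointCubic r a) (hb : fixedPointCubic r b < 0) :
    ∃ m ∈ Set.Ioo a b, fixedPointCubic r m = 0 :=
  intermediate_value_Ioo' hab (continuous_fixedPointCubic r).continuousOn ⟨hb, ha⟩

/-- **Roots of the cubic fixed-point equation.**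
For `0 < r < 1`, the equation `2rm = (m − 1/2)²(m + 3/2)` has exactly three real
solutions `m₁ < m₂ < m₃`, satisfying `m₁ < −3/2`, `0 < m₂ < 1/2`, and
`1/2 < m₃ < 3/2`. -/
theorem cubic_fixed_point_roots (r : ℝ) (hr0 : 0 < r) (hr1 : r < 1) :
    ∃ m1 m2 m3 : ℝ, m1 < m2 ∧ m2 < m3 ∧
      m1 < -(3 / 2) ∧ 0 < m2 ∧ m2 < 1 / 2 ∧ 1 / 2 < m3 ∧ m3 < 3 / 2 ∧
      {m : ℝ | 2 * r * m = (m - 1 / 2) ^ 2 * (m + 3 / 2)} = {m1, m2, m3} := by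
  obtain ⟨m1, ⟨-, hm1⟩, h1⟩ := exists_fixedPointCubic_root_of_lt_of_gt (r := r)
    (by norm_num : (-3 : ℝ) ≤ -(3 / 2)) (by norm_num [fixedPointCubic]; linarith)
    (by norm_num [fixedPointCubic]; linarith)
  obtain ⟨m2, ⟨hm2, hm2'⟩, h2⟩ := exists_fixedPointCubic_root_of_gt_of_lt (r := r)
    (by norm_num : (0 : ℝ) ≤ 1 / 2) (by norm_num [fixedPointCubic])
    (by norm_num [fixedPointCubic]; linarith)
  obtain ⟨m3, ⟨hm3, hm3'⟩, h3⟩ := exists_fixedPointCubic_root_of_lt_of_gt (r := r)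
    (by norm_num : (1 / 2 : ℝ) ≤ 3 / 2) (by norm_num [fixedPointCubic]; linarith)
    (by norm_num [fixedPointCubic]; linarith)
  refine ⟨m1, m2, m3, by linarith, by linarith, hm1, hm2, hm2', hm3, hm3', ?_⟩
  ext m
  simp only [Set.mem_ofPred_eq, Set.mem_insert_iff, Set.mem_singleton_iff,
    ← fixedPointCubic_eq_zero_iff, fixedPointCubic_eq] at h1 h2 h3 ⊢
  exact cubic_eq_zero_iff_of_roots (by linarith) (by linarith) (by linarith) h1 h2 h3 m
end

section
/- Let 0 < r < r′ < 1, let m ∈ (1/2, 3/2) satisfy 2rm = (m − 1/2)²(m + 3/2), and let m′ ∈ (1/2, 3/2) satisfy 2r′m′ = (m′ − 1/2)²(m′ + 3/2). Then m < m′; that is, the root m₃(r) ∈ (1/2, 3/2) of the cubic fixed-point equation is strictly increasing in r. -/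
/-! The equation `2 r m = (m - 1/2)² (m + 3/2)` says `r = φ m` with
`φ m = (m - 1/2)² (m + 3/2) / (2 m) = (m² + m/2 - 5/4 + 3/(8m)) / 2`, and `φ` is strictly
increasing on `[1/2, ∞)` (its derivative `m + 1/4 - 3/(16 m²)` vanishes at `1/2`).
Hence the root in `(1/2, 3/2)` is the inverse of `φ` there, which is strictly increasing. -/

open Set

noncomputable section

/-- The restitution coefficient for which `m` is a fixed point on the exceptional axis. -/
def restitutionOfRoot (m : ℝ) : ℝ := (m - 1 / 2) ^ 2 * (m + 3 / 2) / (2 * m)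

lemma eq_restitutionOfRoot_iff {r m : ℝ} (hm : m ≠ 0) :
    r = restitutionOfRoot m ↔ 2 * r * m = (m - 1 / 2) ^ 2 * (m + 3 / 2) := by
  rw [restitutionOfRoot, eq_div_iff (mul_ne_zero two_ne_zero hm)]
  constructor <;> intro h <;> linarith

lemma restitutionOfRoot_sub {a b : ℝ} (ha : a ≠ 0) (hb : b ≠ 0) :
    restitutionOfRoot b - restitutionOfRoot a = (b - a) * (a + b + 1 / 2 - 3 / (8 * a * b)) / 2 := by
  unfold restitutionOfRoot
  field_simp
  ring

lemma restitutionOfRoot_strictMonoOn : StrictMonoOn restitutionOfRoot (Ici (1 / 2)) := by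
  intro a (ha : 1 / 2 ≤ a) b (hb : 1 / 2 ≤ b) hab
  have hab_pos : 1 / 4 < a * b := by nlinarith
  have hfrac : 3 / (8 * a * b) < 3 / 2 := by
    rw [mul_assoc, div_lt_div_iff_of_pos_left] <;> linarith
  have hdiff := restitutionOfRoot_sub (a := a) (b := b) (by linarith) (by linarith)
  have hfactor : 0 < (b - a) * (a + b + 1 / 2 - 3 / (8 * a * b)) :=
    mul_pos (by linarith) (by linarith)
  linarith

theorem cubic_root_strict_mono_general (r r' m m' : ℝ)
    (hrr' : r < r')
    (hm : m ∈ Set.Ioo (1 / 2 : ℝ) (3 / 2))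
    (heq : 2 * r * m = (m - 1 / 2) ^ 2 * (m + 3 / 2))
    (hm' : m' ∈ Set.Ioo (1 / 2 : ℝ) (3 / 2))
    (heq' : 2 * r' * m' = (m' - 1 / 2) ^ 2 * (m' + 3 / 2)) :
    m < m' := by
  have hr : r = restitutionOfRoot m := (eq_restitutionOfRoot_iff (by linarith [hm.1])).2 heq
  have hr' : r' = restitutionOfRoot m' := (eq_restitutionOfRoot_iff (by linarith [hm'.1])).2 heq'
  rw [hr, hr'] at hrr'
  exact (restitutionOfRoot_strictMonoOn.lt_iff_lt hm.1.le hm'.1.le).1 hrr'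

/-- **Monotonicity of the root `m₃(r)`.**
If `0 < r < r' < 1`, `m ∈ (1/2, 3/2)` satisfies `2rm = (m − 1/2)²(m + 3/2)` and
`m' ∈ (1/2, 3/2)` satisfies `2r'm' = (m' − 1/2)²(m' + 3/2)`, then `m < m'`:
the root `m₃(r)` of the cubic fixed-point equation in `(1/2, 3/2)` is strictly
increasing in `r`. -/
theorem cubic_root_strict_mono (r r' m m' : ℝ)
    (hr0 : 0 < r) (hrr' : r < r') (hr'1 : r' < 1)
    (hm : m ∈ Set.Ioo (1 / 2 : ℝ) (3 / 2))
    (heq : 2 * r * m = (m - 1 / 2) ^ 2 * (m + 3 / 2))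
    (hm' : m' ∈ Set.Ioo (1 / 2 : ℝ) (3 / 2))
    (heq' : 2 * r' * m' = (m' - 1 / 2) ^ 2 * (m' + 3 / 2)) :
    m < m' :=
  cubic_root_strict_mono_general r r' m m' hrr' hm heq hm' heq'

end
end

section
/- Let 0 < r < 1 and let m ∈ (1/2, 3/2) satisfy 2rm = (m − 1/2)²(m + 3/2). Then the numbers λ = m − 1/2 and λ′ = (2m + 3)²/(8m²(2m − 1)) satisfy 0 < λ < 1 and λ′ > 1. -/
/-! The bounds on `λ = m - 1/2` are read off from `1/2 < m < 3/2`. For `λ'`, the difference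
between numerator and denominator factors as `(3 - 2m)(8m² + 6m + 3)`, which is positive on that
interval; the root `m = 3/2` of the factor `3 - 2m` is exactly the right end of the interval. -/

theorem sq_two_mul_add_three_sub_eq (m : ℝ) :
    (2 * m + 3) ^ 2 - 8 * m ^ 2 * (2 * m - 1) = (3 - 2 * m) * (8 * m ^ 2 + 6 * m + 3) := by
  ring

theorem one_lt_sq_two_mul_add_three_div {m : ℝ} (hm : m ∈ Set.Ioo (1 / 2 : ℝ) (3 / 2)) :
    1 < (2 * m + 3) ^ 2 / (8 * m ^ 2 * (2 * m - 1)) := by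
  obtain ⟨hlo, hhi⟩ := hm
  have hm0 : 0 < m := by linarith
  have hden : 0 < 8 * m ^ 2 * (2 * m - 1) := by
    have : 0 < 2 * m - 1 := by linarith
    positivity
  have hdiff : 0 < (3 - 2 * m) * (8 * m ^ 2 + 6 * m + 3) := by
    have : 0 < 3 - 2 * m := by linarith
    positivity
  rw [one_lt_div hden]
  linarith [sq_two_mul_add_three_sub_eq m]

theorem saddle_eigenvalues_general (m : ℝ)
    (hm : m ∈ Set.Ioo (1 / 2 : ℝ) (3 / 2)) :
    0 < m - 1 / 2 ∧ m - 1 / 2 < 1 ∧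
    1 < (2 * m + 3) ^ 2 / (8 * m ^ 2 * (2 * m - 1)) :=
  ⟨by linarith [hm.1], by linarith [hm.2], one_lt_sq_two_mul_add_three_div hm⟩

/-- **Eigenvalues at the saddle fixed point `(0, m₃)`.**
Let `0 < r < 1` and `m ∈ (1/2, 3/2)` satisfy `2rm = (m − 1/2)²(m + 3/2)`.  Then
`λ = m − 1/2` and `λ' = (2m + 3)²/(8m²(2m − 1))` satisfy `0 < λ < 1` and `λ' > 1`. -/
theorem saddle_eigenvalues (r m : ℝ) (hr0 : 0 < r) (hr1 : r < 1)
    (hm : m ∈ Set.Ioo (1 / 2 : ℝ) (3 / 2))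
    (heq : 2 * r * m = (m - 1 / 2) ^ 2 * (m + 3 / 2)) :
    0 < m - 1 / 2 ∧ m - 1 / 2 < 1 ∧
    1 < (2 * m + 3) ^ 2 / (8 * m ^ 2 * (2 * m - 1)) :=
  saddle_eigenvalues_general m hm
end

section
/- Let 0 < r < 1 and let m₃ ∈ (1/2, 3/2) satisfy 2rm₃ = (m₃ − 1/2)²(m₃ + 3/2). Define h(σ, η) = (η − σ/2, √(r(2η² − 3ση) + (9/4)(η − σ/2)²)) wherever the radicand is nonnegative. Then for every s ≥ 0 the radicand at (s, m₃ s) equals s² m₃² (m₃ − 1/2)² ≥ 0 and h(s, m₃ s) = ((m₃ − 1/2)s, m₃ (m₃ − 1/2)s); hence the ray { (s, m₃ s) : s ≥ 0 } is invariant under h, and on this ray h contracts the distance to the origin by the factor m₃ − 1/2 ∈ (0, 1). -/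
/-!
On the ray `η = m σ` the radicand is `σ² (r m (2m − 3) + (9/4)(m − 1/2)²)`, and the fixed-point
equation rewrites `r m (2m − 3)` as `(m − 1/2)² (m² − 9/4)`, so the radicand collapses to the
perfect square `(m (m − 1/2) σ)²`. Hence `h(σ, mσ) = (m − 1/2) • (σ, mσ)` for `σ ≥ 0`.
-/

namespace Chatter

noncomputable def radicand (r σ η : ℝ) : ℝ :=
  r * (2 * η ^ 2 - 3 * σ * η) + (9 / 4) * (η - σ / 2) ^ 2

noncomputable def blowupMap (r σ η : ℝ) : ℝ × ℝ :=
  (η - σ / 2, Real.sqrt (radicand r σ η))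

variable {r m : ℝ}

theorem radicand_ray (heq : 2 * r * m = (m - 1 / 2) ^ 2 * (m + 3 / 2)) (s : ℝ) :
    radicand r s (m * s) = (m * ((m - 1 / 2) * s)) ^ 2 := by
  have hrm : r * m * (2 * m - 3) = (m - 1 / 2) ^ 2 * (m ^ 2 - 9 / 4) := by
    linear_combination (m - 3 / 2) * heq
  unfold radicand
  linear_combination s ^ 2 * hrm

theorem blowupMap_ray (heq : 2 * r * m = (m - 1 / 2) ^ 2 * (m + 3 / 2)) (hm : 1 / 2 ≤ m)
    {s : ℝ} (hs : 0 ≤ s) :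
    blowupMap r s (m * s) = (m - 1 / 2) • ((s, m * s) : ℝ × ℝ) := by
  have hm' : 0 ≤ m - 1 / 2 := by linarith
  rw [blowupMap, radicand_ray heq, Real.sqrt_sq (by positivity), Prod.smul_mk, smul_eq_mul,
    smul_eq_mul]
  ext <;> ring

theorem norm_blowupMap_ray (heq : 2 * r * m = (m - 1 / 2) ^ 2 * (m + 3 / 2)) (hm : 1 / 2 ≤ m)
    {s : ℝ} (hs : 0 ≤ s) :
    ‖blowupMap r s (m * s)‖ = (m - 1 / 2) * ‖((s, m * s) : ℝ × ℝ)‖ := by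
  rw [blowupMap_ray heq hm hs, norm_smul, Real.norm_of_nonneg (by linarith)]

end Chatter

open Chatter in
theorem invariant_ray_blowup_general (r m3 : ℝ)
    (hm3 : m3 ∈ Set.Ioo (1 / 2 : ℝ) (3 / 2))
    (heq : 2 * r * m3 = (m3 - 1 / 2) ^ 2 * (m3 + 3 / 2))
    (Q : ℝ → ℝ → ℝ)
    (hQ : ∀ σ η : ℝ, Q σ η = r * (2 * η ^ 2 - 3 * σ * η) + (9 / 4) * (η - σ / 2) ^ 2)
    (h : ℝ → ℝ → ℝ × ℝ)
    (hh : ∀ σ η : ℝ, h σ η = (η - σ / 2, Real.sqrt (Q σ η))) :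
    (∀ s : ℝ, 0 ≤ s →
      Q s (m3 * s) = s ^ 2 * m3 ^ 2 * (m3 - 1 / 2) ^ 2 ∧
      0 ≤ Q s (m3 * s) ∧
      h s (m3 * s) = ((m3 - 1 / 2) * s, m3 * ((m3 - 1 / 2) * s))) ∧
    (∀ s : ℝ, 0 ≤ s → ∃ s' : ℝ, 0 ≤ s' ∧ h s (m3 * s) = (s', m3 * s')) ∧
    0 < m3 - 1 / 2 ∧ m3 - 1 / 2 < 1 ∧
    (∀ s : ℝ, 0 ≤ s →
      ‖h s (m3 * s)‖ = (m3 - 1 / 2) * ‖((s, m3 * s) : ℝ × ℝ)‖) := by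
  obtain ⟨hm_gt, hm_lt⟩ := hm3
  obtain rfl : Q = radicand r := funext₂ hQ
  obtain rfl : h = blowupMap r := funext₂ hh
  have hm : 1 / 2 ≤ m3 := hm_gt.le
  have hmap : ∀ s, 0 ≤ s → blowupMap r s (m3 * s) = ((m3 - 1 / 2) * s, m3 * ((m3 - 1 / 2) * s)) :=
    fun s hs => by rw [blowupMap_ray heq hm hs, Prod.smul_mk, smul_eq_mul, smul_eq_mul, mul_left_comm]
  refine ⟨fun s hs => ⟨?_, ?_, hmap s hs⟩, fun s hs => ⟨_, ?_, hmap s hs⟩, by linarith,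
    by linarith, fun s hs => norm_blowupMap_ray heq hm hs⟩
  · rw [radicand_ray heq]; ring
  · rw [radicand_ray heq]; positivity
  · exact mul_nonneg (by linarith) hs

/-- **Invariant ray of the leading-order blown-up chatter map.**
Let `0 < r < 1` and let `m₃ ∈ (1/2, 3/2)` satisfy `2rm₃ = (m₃ − 1/2)²(m₃ + 3/2)`.
With `Q(σ, η) = r(2η² − 3ση) + (9/4)(η − σ/2)²` and `h(σ, η) = (η − σ/2, √(Q(σ, η)))`,
for every `s ≥ 0` the radicand at `(s, m₃ s)` equals `s²m₃²(m₃ − 1/2)² ≥ 0` and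
`h(s, m₃ s) = ((m₃ − 1/2)s, m₃(m₃ − 1/2)s)`; hence the ray `{(s, m₃ s) : s ≥ 0}`
is invariant under `h`, on which `h` contracts the distance to the origin by the
factor `m₃ − 1/2 ∈ (0, 1)`. -/
theorem invariant_ray_blowup (r m3 : ℝ) (hr0 : 0 < r) (hr1 : r < 1)
    (hm3 : m3 ∈ Set.Ioo (1 / 2 : ℝ) (3 / 2))
    (heq : 2 * r * m3 = (m3 - 1 / 2) ^ 2 * (m3 + 3 / 2))
    (Q : ℝ → ℝ → ℝ)
    (hQ : ∀ σ η : ℝ, Q σ η = r * (2 * η ^ 2 - 3 * σ * η) + (9 / 4) * (η - σ / 2) ^ 2)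
    (h : ℝ → ℝ → ℝ × ℝ)
    (hh : ∀ σ η : ℝ, h σ η = (η - σ / 2, Real.sqrt (Q σ η))) :
    (∀ s : ℝ, 0 ≤ s →
      Q s (m3 * s) = s ^ 2 * m3 ^ 2 * (m3 - 1 / 2) ^ 2 ∧
      0 ≤ Q s (m3 * s) ∧
      h s (m3 * s) = ((m3 - 1 / 2) * s, m3 * ((m3 - 1 / 2) * s))) ∧
    (∀ s : ℝ, 0 ≤ s → ∃ s' : ℝ, 0 ≤ s' ∧ h s (m3 * s) = (s', m3 * s')) ∧
    0 < m3 - 1 / 2 ∧ m3 - 1 / 2 < 1 ∧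
    (∀ s : ℝ, 0 ≤ s →
      ‖h s (m3 * s)‖ = (m3 - 1 / 2) * ‖((s, m3 * s) : ℝ × ℝ)‖) :=
  invariant_ray_blowup_general r m3 hm3 heq Q hQ h hh
end

section
/- Let 0 < r < 1. Then the set of real numbers m ≠ −1 satisfying r(6m + 8m² + 3m³) = (1 + m)³(6m + 4m² + m³) consists of exactly two elements: m = 0 and one further value m*, and this m* satisfies −1 < m* < 0. Equivalently, the equation r(6 + 8m + 3m²) = (1 + m)³(6 + 4m + m²) has a unique real solution, and it lies in (−1, 0). -/
private lemma swanQpos (m : ℝ) : 0 < 6 + 8 * m + 3 * m ^ 2 := by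
  nlinarith [sq_nonneg (3 * m + 4)]

private lemma swanSpos (m : ℝ) : 0 < 6 + 4 * m + m ^ 2 := by
  nlinarith [sq_nonneg (m + 2)]

noncomputable def swanPhi (m : ℝ) : ℝ :=
  (1 + m) ^ 3 * (6 + 4 * m + m ^ 2) / (6 + 8 * m + 3 * m ^ 2)

private lemma swanPhi_hasDeriv (m : ℝ) :
    HasDerivAt swanPhi
      ((1 + m) ^ 2 * (9 * m ^ 4 + 56 * m ^ 3 + 140 * m ^ 2 + 168 * m + 84)
        / (6 + 8 * m + 3 * m ^ 2) ^ 2) m := by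
  have hQ : (6 + 8 * m + 3 * m ^ 2) ≠ 0 := (swanQpos m).ne'
  have h1 : HasDerivAt (fun x : ℝ => (1 + x) ^ 3 * (6 + 4 * x + x ^ 2))
      ((3 * (1 + m) ^ 2 * 1) * (6 + 4 * m + m ^ 2)
        + (1 + m) ^ 3 * (0 + 4 * 1 + 2 * m ^ 1 * 1)) m := by
    exact (((hasDerivAt_id m).const_add 1).pow 3).mul
      (((hasDerivAt_const m 6).add ((hasDerivAt_id m).const_mul 4)).add
        ((hasDerivAt_id m).pow 2))
  have h2 : HasDerivAt (fun x : ℝ => 6 + 8 * x + 3 * x ^ 2)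
      (0 + 8 * 1 + 3 * (2 * m ^ 1 * 1)) m := by
    exact ((hasDerivAt_const m 6).add ((hasDerivAt_id m).const_mul 8)).add
      (((hasDerivAt_id m).pow 2).const_mul 3)
  have h3 := h1.div h2 hQ
  convert h3 using 1
  · rfl
  · rfl
  · rfl
  · ring

private lemma swanPhi_mono : StrictMonoOn swanPhi (Set.Icc (-1 : ℝ) 0) := by
  apply strictMonoOn_of_deriv_pos (convex_Icc _ _)
  · have hc : Continuous swanPhi := by
      unfold swanPhi
      exact Continuous.div (by continuity) (by continuity) (fun x => (swanQpos x).ne')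
    exact hc.continuousOn
  · intro x hx
    rw [interior_Icc] at hx
    rw [(swanPhi_hasDeriv x).deriv]
    apply div_pos
    · have h1 : 0 < 1 + x := by linarith [hx.1]
      have hP : 0 < 9 * x ^ 4 + 56 * x ^ 3 + 140 * x ^ 2 + 168 * x + 84 := by
        nlinarith [pow_pos h1 4, pow_pos h1 3, pow_pos h1 2, h1]
      exact mul_pos (pow_pos h1 2) hP
    · exact pow_pos (swanQpos x) 2

private lemma swan_root_mem (r : ℝ) (hr0 : 0 < r) (hr1 : r < 1) (m : ℝ)
    (h : r * (6 + 8 * m + 3 * m ^ 2) = (1 + m) ^ 3 * (6 + 4 * m + m ^ 2)) :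
    -1 < m ∧ m < 0 := by
  constructor
  · by_contra hc
    push_neg at hc
    have h3 : (1 + m) ^ 3 * (6 + 4 * m + m ^ 2) ≤ 0 := by
      apply mul_nonpos_of_nonpos_of_nonneg
      · nlinarith [sq_nonneg (1 + m)]
      · exact (swanSpos m).le
    nlinarith [mul_pos hr0 (swanQpos m)]
  · by_contra hc
    push_neg at hc
    have h4 : 6 + 8 * m + 3 * m ^ 2 ≤ (1 + m) ^ 3 * (6 + 4 * m + m ^ 2) := by
      nlinarith [pow_nonneg hc 5, pow_nonneg hc 4, pow_nonneg hc 3, sq_nonneg m, hc]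
    nlinarith [mul_pos (sub_pos.2 hr1) (swanQpos m)]

private lemma swan_exists (r : ℝ) (hr0 : 0 < r) (hr1 : r < 1) :
    ∃ m : ℝ, -1 < m ∧ m < 0 ∧
      r * (6 + 8 * m + 3 * m ^ 2) = (1 + m) ^ 3 * (6 + 4 * m + m ^ 2) := by
  have hcont : Continuous fun m : ℝ =>
      (1 + m) ^ 3 * (6 + 4 * m + m ^ 2) - r * (6 + 8 * m + 3 * m ^ 2) := by continuity
  have key := intermediate_value_Ioo (by norm_num : (-1 : ℝ) ≤ 0) hcont.continuousOn
  have h0 : (0 : ℝ) ∈ Set.Ioo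
      ((1 + (-1 : ℝ)) ^ 3 * (6 + 4 * (-1 : ℝ) + (-1 : ℝ) ^ 2)
        - r * (6 + 8 * (-1 : ℝ) + 3 * (-1 : ℝ) ^ 2))
      ((1 + (0 : ℝ)) ^ 3 * (6 + 4 * (0 : ℝ) + (0 : ℝ) ^ 2)
        - r * (6 + 8 * (0 : ℝ) + 3 * (0 : ℝ) ^ 2)) := by
    constructor <;> · norm_num; nlinarith
  obtain ⟨m, hm, hFm⟩ := key h0
  refine ⟨m, hm.1, hm.2, ?_⟩
  simp only at hFm
  linarith

private lemma swan_phi_eq (r m : ℝ) (hm : -1 < m)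
    (h : r * (6 + 8 * m + 3 * m ^ 2) = (1 + m) ^ 3 * (6 + 4 * m + m ^ 2)) :
    swanPhi m = r := by
  unfold swanPhi
  rw [← h, mul_div_assoc, div_self (swanQpos m).ne', mul_one]

/-- **Fixed points on the exceptional axis at a swan point.**
Let `0 < r < 1`.  The set of real `m ≠ −1` with
`r(6m + 8m² + 3m³) = (1 + m)³(6m + 4m² + m³)` consists of exactly two elements:
`m = 0` and one further value `m*` with `−1 < m* < 0`.  Equivalently, the equation
`r(6 + 8m + 3m²) = (1 + m)³(6 + 4m + m²)` has a unique real solution, lying in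
`(−1, 0)`. -/
theorem swan_fixed_points (r : ℝ) (hr0 : 0 < r) (hr1 : r < 1) :
    (∃ ms : ℝ, -1 < ms ∧ ms < 0 ∧
      {m : ℝ | m ≠ -1 ∧
          r * (6 * m + 8 * m ^ 2 + 3 * m ^ 3)
            = (1 + m) ^ 3 * (6 * m + 4 * m ^ 2 + m ^ 3)}
        = {0, ms}) ∧
    (∃! m : ℝ, r * (6 + 8 * m + 3 * m ^ 2)
        = (1 + m) ^ 3 * (6 + 4 * m + m ^ 2)) ∧
    (∀ m : ℝ, r * (6 + 8 * m + 3 * m ^ 2)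
        = (1 + m) ^ 3 * (6 + 4 * m + m ^ 2) → -1 < m ∧ m < 0) := by
  obtain ⟨ms, hms1, hms2, hms⟩ := swan_exists r hr0 hr1
  have uniq : ∀ m : ℝ, r * (6 + 8 * m + 3 * m ^ 2)
      = (1 + m) ^ 3 * (6 + 4 * m + m ^ 2) → m = ms := by
    intro m hm
    obtain ⟨hm1, hm2⟩ := swan_root_mem r hr0 hr1 m hm
    have e1 := swan_phi_eq r m hm1 hm
    have e2 := swan_phi_eq r ms hms1 hms
    exact swanPhi_mono.injOn (Set.mem_Icc.2 ⟨hm1.le, hm2.le⟩)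
      (Set.mem_Icc.2 ⟨hms1.le, hms2.le⟩) (e1.trans e2.symm)
  refine ⟨⟨ms, hms1, hms2, ?_⟩, ⟨ms, hms, fun m hm => uniq m hm⟩,
    fun m hm => swan_root_mem r hr0 hr1 m hm⟩
  ext m
  simp only [Set.mem_setOf_eq, Set.mem_insert_iff, Set.mem_singleton_iff]
  constructor
  · rintro ⟨hne, heq⟩
    have hfac : m * (r * (6 + 8 * m + 3 * m ^ 2)
        - (1 + m) ^ 3 * (6 + 4 * m + m ^ 2)) = 0 := by linear_combination heq
    rcases mul_eq_zero.1 hfac with h | h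
    · exact Or.inl h
    · exact Or.inr (uniq m (by linarith))
  · rintro (rfl | rfl)
    · exact ⟨by norm_num, by ring⟩
    · exact ⟨hms1.ne', by linear_combination m * hms⟩
end

section
/- Let 0 < r < 1 and let m* ∈ (−1, 0) satisfy r(6 + 8m* + 3m*²) = (1 + m*)³(6 + 4m* + m*²). Then for every real s ≠ 0 and every real m̄, if r s³(6m* + 8m*² + 3m*³) = (s(1 + m*))³(6m̄ + 4m̄² + m̄³), then m̄ = m*. Consequently the ray { (s, m* s) : s > 0 } is invariant under the leading-order blown-up swan map (s, m) ↦ (s(1 + m), m̄), on which the s-coordinate is contracted by the factor 1 + m* ∈ (0, 1). -/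
/-! The fixed-point equation for `m*`, multiplied by `s³ m*`, says that `(s, m* s)` itself
satisfies the defining relation of the return map, so any admissible `m̄` has the same value
of the cubic `x ↦ 6x + 4x² + x³` as `m*`; that cubic is strictly increasing because its
derivative `6 + 8x + 3x²` has negative discriminant. -/

theorem strictMono_six_mul_add_four_mul_sq_add_cube {K : Type*} [Field K] [LinearOrder K]
    [IsStrictOrderedRing K] : StrictMono fun x : K => 6 * x + 4 * x ^ 2 + x ^ 3 := by
  intro a b hab
  have hfactor : 0 < a ^ 2 + a * b + b ^ 2 + 4 * (a + b) + 6 := by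
    nlinarith [sq_nonneg (a + b + 4), sq_nonneg (a - b), sq_nonneg (a + b + 8 / 3)]
  have hdiff : (6 * b + 4 * b ^ 2 + b ^ 3) - (6 * a + 4 * a ^ 2 + a ^ 3)
      = (b - a) * (a ^ 2 + a * b + b ^ 2 + 4 * (a + b) + 6) := by ring
  have := mul_pos (sub_pos.mpr hab) hfactor
  dsimp only
  linarith

theorem swan_fixedPoint_relation {R : Type*} [CommRing R] {r m : R}
    (heq : r * (6 + 8 * m + 3 * m ^ 2) = (1 + m) ^ 3 * (6 + 4 * m + m ^ 2)) (s : R) :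
    r * s ^ 3 * (6 * m + 8 * m ^ 2 + 3 * m ^ 3)
      = (s * (1 + m)) ^ 3 * (6 * m + 4 * m ^ 2 + m ^ 3) := by
  linear_combination s ^ 3 * m * heq

theorem swan_invariant_ray_general (r ms : ℝ)
    (hms : ms ∈ Set.Ioo (-1 : ℝ) 0)
    (heq : r * (6 + 8 * ms + 3 * ms ^ 2)
      = (1 + ms) ^ 3 * (6 + 4 * ms + ms ^ 2)) :
    (∀ s : ℝ, s ≠ 0 → ∀ mb : ℝ,
      r * s ^ 3 * (6 * ms + 8 * ms ^ 2 + 3 * ms ^ 3)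
          = (s * (1 + ms)) ^ 3 * (6 * mb + 4 * mb ^ 2 + mb ^ 3) →
      mb = ms) ∧
    0 < 1 + ms ∧ 1 + ms < 1 := by
  obtain ⟨hms_gt, hms_lt⟩ := hms
  refine ⟨fun s hs mb h => ?_, by linarith, by linarith⟩
  have hscale : (s * (1 + ms)) ^ 3 ≠ 0 := pow_ne_zero 3 (mul_ne_zero hs (by linarith))
  refine strictMono_six_mul_add_four_mul_sq_add_cube.injective (mul_left_cancel₀ hscale ?_)
  rw [← h, swan_fixedPoint_relation heq]

/-- **Invariant ray of the leading-order blown-up swan map.**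
Let `0 < r < 1` and let `m* ∈ (−1, 0)` satisfy
`r(6 + 8m* + 3m*²) = (1 + m*)³(6 + 4m* + m*²)`.  Then for every `s ≠ 0` and every
`m̄`, if `r s³(6m* + 8m*² + 3m*³) = (s(1 + m*))³(6m̄ + 4m̄² + m̄³)` then `m̄ = m*`.
Consequently the ray `{(s, m* s) : s > 0}` is invariant under the leading-order
blown-up swan map `(s, m) ↦ (s(1 + m), m̄)`, on which the `s`-coordinate is
contracted by the factor `1 + m* ∈ (0, 1)`. -/
theorem swan_invariant_ray (r ms : ℝ) (hr0 : 0 < r) (hr1 : r < 1)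
    (hms : ms ∈ Set.Ioo (-1 : ℝ) 0)
    (heq : r * (6 + 8 * ms + 3 * ms ^ 2)
      = (1 + ms) ^ 3 * (6 + 4 * ms + ms ^ 2)) :
    (∀ s : ℝ, s ≠ 0 → ∀ mb : ℝ,
      r * s ^ 3 * (6 * ms + 8 * ms ^ 2 + 3 * ms ^ 3)
          = (s * (1 + ms)) ^ 3 * (6 * mb + 4 * mb ^ 2 + mb ^ 3) →
      mb = ms) ∧
    0 < 1 + ms ∧ 1 + ms < 1 :=
  swan_invariant_ray_general r ms hms heq
end
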